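/- For every T > 0 and every t ∈ [0, T], |sinh(T − t) − sinh T + sinh t| / (T sinh T − 2(cosh T − 1)) ≤ 3 / (2T). (The turnpike factor in the optimal velocity trajectory of the double integrator is uniformly bounded by (3/2)/T on [0, T].) -/

import Mathlib

/-!
Put `T = 2a` and `t = a - u` with `|u| ≤ a`. The addition formulas factor the numerator as
`2 sinh a (cosh u - cosh a)` and the denominator as `4 sinh a (a cosh a - sinh a)`, so after
cancelling `sinh a` and bounding `cosh u ≥ 1` the claim reduces to `3 sinh a ≤ a cosh a + 2a`.
That inequality comes from `sinh a ≤ a cosh a` by integrating nonnegative derivatives twice,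
and together with `a < sinh a` it gives `sinh a < a cosh a`, i.e. a positive denominator.
-/

open Real

lemma le_of_hasDerivAt_nonneg {f f' : ℝ → ℝ} (hf : ∀ y, HasDerivAt f (f' y) y)
    (hf' : ∀ y, 0 < y → 0 ≤ f' y) {x : ℝ} (hx : 0 ≤ x) : f 0 ≤ f x := by
  refine monotoneOn_of_hasDerivWithinAt_nonneg (convex_Ici 0)
    (fun y _ ↦ (hf y).continuousAt.continuousWithinAt) (fun y _ ↦ (hf y).hasDerivWithinAt)
    (fun y hy ↦ hf' y ?_) Set.self_mem_Ici hx hx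
  rwa [interior_Ici] at hy

namespace Real

variable {x : ℝ}

lemma sinh_le_mul_cosh (hx : 0 ≤ x) : sinh x ≤ x * cosh x := by
  have hf (y : ℝ) : HasDerivAt (fun y ↦ y * cosh y - sinh y) (y * sinh y) y := by
    exact (((hasDerivAt_id' y).mul (hasDerivAt_cosh y)).sub (hasDerivAt_sinh y)).congr_deriv
      (by ring)
  have := le_of_hasDerivAt_nonneg hf (fun y hy ↦ (mul_pos hy (sinh_pos_iff.mpr hy)).le) hx
  simp only [zero_mul, sinh_zero, sub_zero] at this
  linarith

lemma two_mul_cosh_le (hx : 0 ≤ x) : 2 * cosh x ≤ x * sinh x + 2 := by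
  have hf (y : ℝ) :
      HasDerivAt (fun y ↦ y * sinh y + 2 - 2 * cosh y) (y * cosh y - sinh y) y := by
    exact ((((hasDerivAt_id' y).mul (hasDerivAt_sinh y)).add_const 2).sub
      ((hasDerivAt_cosh y).const_mul 2)).congr_deriv (by ring)
  have := le_of_hasDerivAt_nonneg hf (fun y hy ↦ sub_nonneg.mpr (sinh_le_mul_cosh hy.le)) hx
  simp only [zero_mul, cosh_zero] at this
  linarith

lemma three_mul_sinh_le (hx : 0 ≤ x) : 3 * sinh x ≤ x * cosh x + 2 * x := by
  have hf (y : ℝ) : HasDerivAt (fun y ↦ y * cosh y + 2 * y - 3 * sinh y)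
      (y * sinh y + 2 - 2 * cosh y) y := by
    exact ((((hasDerivAt_id' y).mul (hasDerivAt_cosh y)).add
      ((hasDerivAt_id' y).const_mul 2)).sub ((hasDerivAt_sinh y).const_mul 3)).congr_deriv
      (by ring)
  have := le_of_hasDerivAt_nonneg hf (fun y hy ↦ sub_nonneg.mpr (two_mul_cosh_le hy.le)) hx
  simp only [zero_mul, sinh_zero, mul_zero, add_zero, sub_zero] at this
  linarith

lemma sinh_lt_mul_cosh (hx : 0 < x) : sinh x < x * cosh x := by
  linarith [three_mul_sinh_le hx.le, self_lt_sinh_iff.mpr hx]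

lemma sinh_add_add_sinh_sub_sub_sinh_two_mul (a u : ℝ) :
    sinh (a + u) + sinh (a - u) - sinh (2 * a) = 2 * sinh a * (cosh u - cosh a) := by
  rw [sinh_add, sinh_sub, sinh_two_mul]
  ring

lemma two_mul_mul_sinh_two_mul_sub (a : ℝ) :
    2 * a * sinh (2 * a) - 2 * (cosh (2 * a) - 1) = 4 * sinh a * (a * cosh a - sinh a) := by
  rw [sinh_two_mul, cosh_two_mul, cosh_sq]
  ring

end Real

/-- the turnpike factor in the optimal velocity trajectory of the
double integrator is uniformly bounded by `(3/2)/T` on `[0, T]`. -/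
theorem turnpike_factor_bound :
    ∀ T : ℝ, 0 < T → ∀ t ∈ Set.Icc (0 : ℝ) T,
      |sinh (T - t) - sinh T + sinh t| / (T * sinh T - 2 * (cosh T - 1)) ≤
        3 / (2 * T) := by
  intro T hT t ⟨ht0, htT⟩
  obtain ⟨a, rfl⟩ : ∃ a, T = 2 * a := ⟨T / 2, by ring⟩
  obtain ⟨u, rfl⟩ : ∃ u, t = a - u := ⟨a - t, by ring⟩
  have ha : 0 < a := by linarith
  have hs : 0 < sinh a := sinh_pos_iff.mpr ha
  have hcu : cosh u ≤ cosh a := by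
    rw [cosh_le_cosh, abs_of_pos ha, abs_le]; constructor <;> linarith
  have hnum : |sinh (2 * a - (a - u)) - sinh (2 * a) + sinh (a - u)| =
      2 * sinh a * (cosh a - cosh u) := by
    rw [show 2 * a - (a - u) = a + u by ring, sub_add_eq_add_sub,
      sinh_add_add_sinh_sub_sub_sinh_two_mul, abs_of_nonpos (by nlinarith)]
    ring
  have hden : 0 < a * cosh a - sinh a := sub_pos.mpr (sinh_lt_mul_cosh ha)
  rw [hnum, two_mul_mul_sinh_two_mul_sub, div_le_div_iff₀ (by positivity) (by positivity)]
  nlinarith [mul_le_mul_of_nonneg_left (three_mul_sinh_le ha.le) hs.le,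
    mul_le_mul_of_nonneg_left (one_le_cosh u) (mul_pos hs ha).le]
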